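/- For each integer p ≥ 2, let G_p be the graph with a clique U = {u_1,…,u_p}, vertex s joined to each u_i by the path s x_i u_i, and vertex t joined to each u_i by the path t y_i u_i. Then Divider with 2 agents has a winning strategy in the rendezvous game on G_p starting from s and t; that is, d_{G_p}(s,t) ≤ 2, so λ_{G_p}(s,t) − d_{G_p}(s,t) ≥ p − 2. -/

import Mathlib

namespace Rendezvous

variable {V : Type*}

/-- One agent's move: stay put or move along an edge. -/
def Step (G : SimpleGraph V) (a b : V) : Prop := a = b ∨ G.Adj a b

/-- Adjacency of multisets of agent positions: there is a bijective pairing such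
that every agent stays put or moves along an edge. -/
def MAdj (G : SimpleGraph V) (D D' : Multiset V) : Prop := Multiset.Rel (Step G) D D'

/-- `FWin G n a b D`: with Facilitator's agents on `a`, `b`, Divider's agents on the
multiset `D`, and Facilitator to move, Facilitator can force his two agents to meet
within at most `n` moves, whatever Divider does. -/
def FWin (G : SimpleGraph V) : ℕ → V → V → Multiset V → Prop
  | 0, a, b, _ => a = b
  | n + 1, a, b, D => a = b ∨ ∃ a' b', Step G a a' ∧ Step G b b' ∧ a' ∉ D ∧ b' ∉ D ∧
      (a' = b' ∨ ∀ D', MAdj G D D' → a' ∉ D' → b' ∉ D' → FWin G n a' b' D')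

/-- Divider with `k` agents has a winning strategy in the rendezvous game on `G`
starting from `s` and `t`: there is an initial placement from which Facilitator can
never force a meeting. -/
def DividerWins (G : SimpleGraph V) (s t : V) (k : ℕ) : Prop :=
  ∃ D : Multiset V, Multiset.card D = k ∧ s ∉ D ∧ t ∉ D ∧ ∀ n, ¬ FWin G n s t D

/-- `d_G(s,t)`: the minimum number of Divider agents sufficient for Divider to win
(`⊤` if no number suffices, e.g. when `s = t` or `s`, `t` are adjacent). -/
noncomputable def dNum (G : SimpleGraph V) (s t : V) : ℕ∞ :=
  sInf {n : ℕ∞ | ∃ k : ℕ, (k : ℕ∞) = n ∧ DividerWins G s t k}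

/-- A vertex `(s,t)`-separator: a set of vertices avoiding `s` and `t` meeting
every walk from `s` to `t`. -/
def IsSeparator (G : SimpleGraph V) (s t : V) (S : Finset V) : Prop :=
  s ∉ S ∧ t ∉ S ∧ ∀ p : G.Walk s t, ∃ v ∈ p.support, v ∈ S

/-- `λ_G(s,t)`: minimum size of a vertex `(s,t)`-separator (`⊤` if none exists). -/
noncomputable def lambdaNum (G : SimpleGraph V) (s t : V) : ℕ∞ :=
  sInf {n : ℕ∞ | ∃ S : Finset V, (S.card : ℕ∞) = n ∧ IsSeparator G s t S}

end Rendezvous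

namespace Rendezvous

/-- Vertices of the graph `G_p`: a clique `u_1, …, u_p`, vertices `s`, `t`, and the
internal vertices `x_i` of the paths `s x_i u_i` and `y_i` of the paths `t y_i u_i`. -/
inductive RV (p : ℕ) where
  | s : RV p
  | t : RV p
  | u (i : Fin p) : RV p
  | x (i : Fin p) : RV p
  | y (i : Fin p) : RV p
deriving DecidableEq

/-- The edges of `G_p` (up to symmetrization): `U = {u_1,…,u_p}` is a clique, `s` is
joined to each `u_i` by the path `s x_i u_i`, and `t` to each `u_i` by `t y_i u_i`. -/
def rvRel (p : ℕ) : RV p → RV p → Prop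
  | .s, .x _ => True
  | .x i, .u j => i = j
  | .u _, .u _ => True
  | .u i, .y j => i = j
  | .y _, .t => True
  | _, _ => False

/-- The graph `G_p`. -/
def Gp (p : ℕ) : SimpleGraph (RV p) := SimpleGraph.fromRel (rvRel p)

end Rendezvous


/-!
Divider puts both agents on one clique vertex `u_i`. As long as Facilitator's first agent
stays in `{s, x_i}`, it can only leave through `u_i`; dually for the second agent in
`{t, y_j}` and `u_j`. Whenever Facilitator moves into `x_i'` and `y_j'`, Divider answers by
moving along the clique to `u_i'` and `u_j'`, so the agents stay confined to the two sides
and never meet. The bound on `λ` comes from the `p` internally disjoint paths `s x_i u_i y_i t`.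
-/

namespace Rendezvous

section General

variable {V : Type*} {G : SimpleGraph V} {s t : V}

lemma dNum_le_of_dividerWins {k : ℕ} (h : DividerWins G s t k) : dNum G s t ≤ k :=
  sInf_le ⟨k, rfl, h⟩

lemma card_le_lambdaNum_of_internallyDisjoint {ι : Type*} [Fintype ι] (w : ι → G.Walk s t)
    (hw : ∀ i j v, v ∈ (w i).support → v ∈ (w j).support → v ≠ s → v ≠ t → i = j) :
    (Fintype.card ι : ℕ∞) ≤ lambdaNum G s t := by
  refine le_sInf ?_
  rintro n ⟨S, rfl, hs, ht, hsep⟩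
  choose f hf hfS using fun i => hsep (w i)
  have hinj : Function.Injective f := fun i j h =>
    hw i j (f i) (hf i) (h ▸ hf j) (ne_of_mem_of_not_mem (hfS i) hs)
      (ne_of_mem_of_not_mem (hfS i) ht)
  exact_mod_cast Finset.card_le_card_of_injOn f (fun i _ => hfS i) hinj.injOn

end General

variable {p : ℕ}

/-- Positions of Facilitator's first agent that a Divider agent on `u i` cuts off from `t`. -/
def sSide (i : Fin p) (a : RV p) : Prop := a = .s ∨ a = .x i

def tSide (j : Fin p) (b : RV p) : Prop := b = .t ∨ b = .y j

lemma exists_sSide_of_step {i : Fin p} {a a' : RV p} (ha : sSide i a)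
    (hstep : Step (Gp p) a a') (hu : a' ≠ .u i) : ∃ i', sSide i' a' := by
  rcases ha with rfl | rfl <;> cases a' <;>
    simp_all [sSide, Step, Gp, SimpleGraph.fromRel_adj, rvRel] <;> exact ⟨i⟩

lemma exists_tSide_of_step {j : Fin p} {b b' : RV p} (hb : tSide j b)
    (hstep : Step (Gp p) b b') (hu : b' ≠ .u j) : ∃ j', tSide j' b' := by
  rcases hb with rfl | rfl <;> cases b' <;>
    simp_all [tSide, Step, Gp, SimpleGraph.fromRel_adj, rvRel] <;> exact ⟨j⟩

lemma sSide.ne_u {i k : Fin p} {a : RV p} (ha : sSide i a) : a ≠ .u k := by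
  rcases ha with rfl | rfl <;> simp

lemma tSide.ne_u {j k : Fin p} {b : RV p} (hb : tSide j b) : b ≠ .u k := by
  rcases hb with rfl | rfl <;> simp

lemma sSide.ne_of_tSide {i j : Fin p} {a b : RV p} (ha : sSide i a) (hb : tSide j b) :
    a ≠ b := by
  rcases ha with rfl | rfl <;> rcases hb with rfl | rfl <;> simp

lemma step_u_u (k l : Fin p) : Step (Gp p) (.u k) (.u l) := by
  by_cases h : k = l
  · exact .inl (congrArg RV.u h)
  · exact .inr ⟨by simpa using h, .inl trivial⟩

lemma mAdj_pair_u (i j i' j' : Fin p) :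
    MAdj (Gp p) {.u i, .u j} {.u i', .u j'} :=
  .cons (step_u_u i i') (.cons (step_u_u j j') .zero)

lemma not_fWin_of_sSide_of_tSide (n : ℕ) {i j : Fin p} {a b : RV p}
    (ha : sSide i a) (hb : tSide j b) : ¬ FWin (Gp p) n a b {.u i, .u j} := by
  induction n generalizing i j a b with
  | zero => exact ha.ne_of_tSide hb
  | succ n ih =>
    rintro (hab | ⟨a', b', hsa, hsb, haD, hbD, hmeet⟩)
    · exact ha.ne_of_tSide hb hab
    obtain ⟨i', ha'⟩ := exists_sSide_of_step ha hsa fun h => haD (by simp [h])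
    obtain ⟨j', hb'⟩ := exists_tSide_of_step hb hsb fun h => hbD (by simp [h])
    rcases hmeet with hmeet | hall
    · exact ha'.ne_of_tSide hb' hmeet
    · exact ih ha' hb' <| hall _ (mAdj_pair_u i j i' j')
        (by simp [ha'.ne_u]) (by simp [hb'.ne_u])

lemma dividerWins_Gp_two (hp : 0 < p) : DividerWins (Gp p) .s .t 2 :=
  ⟨{.u ⟨0, hp⟩, .u ⟨0, hp⟩}, rfl, by simp, by simp,
    fun n => not_fWin_of_sSide_of_tSide n (.inl rfl) (.inl rfl)⟩

def stPath (i : Fin p) : (Gp p).Walk .s .t :=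
  .cons (v := .x i) (by simp [Gp, rvRel]) <| .cons (v := .u i) (by simp [Gp, rvRel]) <|
    .cons (v := .y i) (by simp [Gp, rvRel]) <| .cons (by simp [Gp, rvRel]) .nil

lemma support_stPath (i : Fin p) : (stPath i).support = [.s, .x i, .u i, .y i, .t] := rfl

lemma le_lambdaNum_Gp (p : ℕ) : (p : ℕ∞) ≤ lambdaNum (Gp p) .s .t := by
  simpa using card_le_lambdaNum_of_internallyDisjoint stPath fun i j v hi hj hs ht => by
    simp only [support_stPath, List.mem_cons, List.not_mem_nil, or_false] at hi hj
    rcases hi with rfl | rfl | rfl | rfl | rfl <;> simp_all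

end Rendezvous

open Rendezvous

/-- on the graph `G_p` (clique `u_1,…,u_p`, `s` joined to each `u_i` by
the path `s x_i u_i`, `t` joined to each `u_i` by the path `t y_i u_i`), Divider with
2 agents has a winning strategy starting from `s` and `t`; hence `d_{G_p}(s,t) ≤ 2`,
and so `λ_{G_p}(s,t) − d_{G_p}(s,t) ≥ p − 2`. -/
theorem divider_wins_Gp_with_two_agents (p : ℕ) (hp : 2 ≤ p) :
    DividerWins (Gp p) RV.s RV.t 2 ∧
    dNum (Gp p) RV.s RV.t ≤ 2 ∧
    (p : ℕ∞) - 2 ≤ lambdaNum (Gp p) RV.s RV.t - dNum (Gp p) RV.s RV.t := by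
  have hwin := dividerWins_Gp_two (p := p) (by omega)
  have hd : dNum (Gp p) RV.s RV.t ≤ 2 := dNum_le_of_dividerWins hwin
  refine ⟨hwin, hd, ?_⟩
  calc (p : ℕ∞) - 2 ≤ lambdaNum (Gp p) RV.s RV.t - 2 := tsub_le_tsub_right (le_lambdaNum_Gp p) 2
    _ ≤ lambdaNum (Gp p) RV.s RV.t - dNum (Gp p) RV.s RV.t := tsub_le_tsub_left hd _
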